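/- A = B ∩ P implies Q: if an invertible element T of a Clifford algebra satisfies both reverse(T)·T ∈ Z^× and involute(reverse(T))·T ∈ Z^×, then T ∈ Z^×(C^{×(0)} ∪ C^{×(1)}); i.e. A ∩ B = Q. -/

import Mathlib

open CliffordAlgebra

noncomputable section

variable {n : ℕ} (Q : QuadraticForm ℝ (Fin n → ℝ))

/-- The standard generators `e_a` of the Clifford algebra. -/
def egen (a : Fin n) : CliffordAlgebra Q := ι Q (Pi.single a 1)

/-- The ordered product of generators indexed by a finite set. -/
def eProd (s : Finset (Fin n)) : CliffordAlgebra Q :=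
  ((s.sort (· ≤ ·)).map (egen Q)).prod

/-- The grade-`k` subspace `C^k`, spanned by the products of `k` distinct generators. -/
def gradeSubmodule (k : ℕ) : Submodule ℝ (CliffordAlgebra Q) :=
  Submodule.span ℝ {x | ∃ s : Finset (Fin n), s.card = k ∧ x = eProd Q s}

/-- The set `Z^× (C^{×(0)} ∪ C^{×(1)})` : invertible central elements times
invertible even or odd elements. -/
def Pset : Set (CliffordAlgebra Q) :=
  {T | ∃ W T₀ : CliffordAlgebra Q,
    W ∈ Subalgebra.center ℝ (CliffordAlgebra Q) ∧ IsUnit W ∧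
    (T₀ ∈ evenOdd Q 0 ∨ T₀ ∈ evenOdd Q 1) ∧ IsUnit T₀ ∧ T = W * T₀}

/-- `Q` is diagonal with entries `±1` in the standard basis (an orthonormal-type basis,
expressing nondegeneracy of `Q`). -/
def DiagQ : Prop :=
  (∀ a, Q (Pi.single a 1) = 1 ∨ Q (Pi.single a 1) = -1) ∧
  (∀ a b : Fin n, a ≠ b → QuadraticMap.polar Q (Pi.single a 1) (Pi.single b 1) = 0)

/-!
Since `reverse T * T` is central and `T` is a unit, `T * reverse T = reverse T * T`; together with
the centrality of `involute (reverse T) * T` this gives `involute T = W * T` with `W` central, and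
applying `involute` twice gives `involute W * W = 1`. The element `W + involute W` is central and
even. Averaging with the twisted conjugations `x ↦ e_a * involute x * e_a⁻¹` projects onto the
span of the words in which every generator occurs an even number of times and fixes central even
elements; such words are scalars, so `W + involute W = r`. Then
`(1 ± W) * (1 ± involute W) = 2 ± r`, so one of `1 ± W` is a central unit `U`, and `U * T` is
even or odd because `involute (U * T) = ± U * T`.
-/

section

variable {R M : Type*} [CommRing R] [AddCommGroup M] [Module R M] {Q : QuadraticForm R M}

theorem add_involute_mem_evenOdd_zero (x : CliffordAlgebra Q) : x + involute x ∈ evenOdd Q 0 := by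
  obtain ⟨y, hy, z, hz, rfl⟩ := Submodule.mem_sup.mp
    ((evenOdd_isCompl Q).sup_eq_top.symm ▸ Submodule.mem_top : x ∈ evenOdd Q 0 ⊔ evenOdd Q 1)
  rw [map_add, involute_eq_of_mem_even hy, involute_eq_of_mem_odd hz, add_add_add_comm,
    add_neg_cancel, add_zero, ← two_smul R]
  exact Submodule.smul_mem _ _ hy

theorem sub_involute_mem_evenOdd_one (x : CliffordAlgebra Q) : x - involute x ∈ evenOdd Q 1 := by
  obtain ⟨y, hy, z, hz, rfl⟩ := Submodule.mem_sup.mp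
    ((evenOdd_isCompl Q).sup_eq_top.symm ▸ Submodule.mem_top : x ∈ evenOdd Q 0 ⊔ evenOdd Q 1)
  rw [map_add, involute_eq_of_mem_even hy, involute_eq_of_mem_odd hz, add_sub_add_comm,
    sub_self, zero_add, sub_neg_eq_add, ← two_smul R]
  exact Submodule.smul_mem _ _ hz

theorem involute_mem_center {x : CliffordAlgebra Q}
    (hx : x ∈ Subalgebra.center R (CliffordAlgebra Q)) :
    involute x ∈ Subalgebra.center R (CliffordAlgebra Q) :=
  MulEquivClass.apply_mem_center (involuteEquiv (Q := Q)) hx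

theorem exists_mem_center_involute_eq_mul {T : CliffordAlgebra Q} (hT : IsUnit T)
    (h₁ : reverse T * T ∈ Subalgebra.center R (CliffordAlgebra Q))
    (h₂ : involute (reverse T) * T ∈ Subalgebra.center R (CliffordAlgebra Q)) :
    ∃ W ∈ Subalgebra.center R (CliffordAlgebra Q), involute T = W * T := by
  obtain ⟨z, hz⟩ : IsUnit (involute (reverse T) * T) :=
    ((hT.map reverseOp).unop.map involute).mul hT
  have hzc : (↑z⁻¹ : CliffordAlgebra Q) ∈ Subalgebra.center R (CliffordAlgebra Q) :=
    Set.units_inv_mem_center (hz ▸ h₂)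
  have hTrev : T * reverse T = reverse T * T :=
    hT.mul_right_cancel (by rw [mul_assoc, Subalgebra.mem_center_iff.mp h₁])
  refine ⟨involute (reverse T * T) * ↑z⁻¹, mul_mem (involute_mem_center h₁) hzc, ?_⟩
  rw [mul_assoc, ← Subalgebra.mem_center_iff.mp hzc, ← mul_assoc, ← hTrev, map_mul,
    mul_assoc (involute T), ← hz, z.mul_inv_cancel_right]

theorem involute_mul_self_eq_one_of_involute_eq_mul {T W : CliffordAlgebra Q} (hT : IsUnit T)
    (hTW : involute T = W * T) : involute W * W = 1 := by
  refine hT.mul_right_cancel ?_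
  have := congrArg involute hTW
  rw [involute_involute, map_mul, hTW, ← mul_assoc] at this
  rw [← this, one_mul]

end

section

variable {R M : Type*} [Field R] [AddCommGroup M] [Module R M] {Q : QuadraticForm R M}

theorem mem_evenOdd_zero_of_involute_eq [NeZero (2 : R)] {x : CliffordAlgebra Q}
    (h : involute x = x) : x ∈ evenOdd Q 0 := by
  have hx := add_involute_mem_evenOdd_zero x
  rwa [h, ← two_smul R, Submodule.smul_mem_iff _ two_ne_zero] at hx

theorem mem_evenOdd_one_of_involute_eq_neg [NeZero (2 : R)] {x : CliffordAlgebra Q}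
    (h : involute x = -x) : x ∈ evenOdd Q 1 := by
  have hx := sub_involute_mem_evenOdd_one x
  rwa [h, sub_neg_eq_add, ← two_smul R, Submodule.smul_mem_iff _ two_ne_zero] at hx

theorem isUnit_one_add_smul_of_involute_mul_eq_one {W : CliffordAlgebra Q}
    (hW : W ∈ Subalgebra.center R (CliffordAlgebra Q)) (hWW : involute W * W = 1) {r ε : R}
    (hr : algebraMap R _ r = W + involute W) (hε : ε * ε = 1) (hεr : 2 + ε * r ≠ 0) :
    IsUnit (1 + ε • W) := by
  have hprod : (1 + ε • W) * (1 + ε • involute W) = algebraMap R _ (2 + ε * r) := by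
    have hWW' : W * involute W = 1 := (Subalgebra.mem_center_iff.mp hW _).symm.trans hWW
    rw [map_add, map_mul, hr, map_ofNat, ← Algebra.smul_def, mul_add, add_mul, add_mul, one_mul,
      one_mul, mul_one, smul_mul_smul_comm, hWW', hε, one_smul, smul_add, ← one_add_one_eq_two]
    abel
  have hcomm : Commute (1 + ε • W) (1 + ε • involute W) :=
    (Subalgebra.mem_center_iff.mp (add_mem (one_mem _) (Subalgebra.smul_mem _ hW ε)) _).symm
  exact (hcomm.isUnit_mul_iff.mp (hprod ▸ (isUnit_iff_ne_zero.mpr hεr).map _)).1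

end

section

def egenProd (l : List (Fin n)) : CliffordAlgebra Q := (l.map (egen Q)).prod

@[simp] theorem egenProd_nil : egenProd Q [] = 1 := rfl

@[simp] theorem egenProd_cons (a : Fin n) (l : List (Fin n)) :
    egenProd Q (a :: l) = egen Q a * egenProd Q l := List.prod_cons

@[simp] theorem egenProd_append (l₁ l₂ : List (Fin n)) :
    egenProd Q (l₁ ++ l₂) = egenProd Q l₁ * egenProd Q l₂ := by
  simp [egenProd]

theorem egen_mul_self (a : Fin n) :
    egen Q a * egen Q a = algebraMap ℝ _ (Q (Pi.single a 1)) :=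
  ι_sq_scalar Q _

theorem involute_egenProd (l : List (Fin n)) :
    involute (egenProd Q l) = (-1 : ℝ) ^ l.length • egenProd Q l := by
  have h := involute_prod_map_ι (Q := Q) (l.map fun a => Pi.single a 1)
  rwa [List.map_map, List.length_map] at h

variable {Q}

theorem DiagQ.mul_self_eq_one (hQ : DiagQ Q) (a : Fin n) :
    Q (Pi.single a 1) * Q (Pi.single a 1) = 1 := by
  rcases hQ.1 a with h | h <;> simp [h]

theorem DiagQ.egen_mul_egen_of_ne (hQ : DiagQ Q) {a b : Fin n} (h : a ≠ b) :
    egen Q a * egen Q b = -(egen Q b * egen Q a) := by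
  refine eq_neg_of_add_eq_zero_left ?_
  rw [egen, egen, ι_mul_ι_add_swap, hQ.2 a b h, map_zero]

theorem DiagQ.egen_mul_egenProd (hQ : DiagQ Q) (a : Fin n) (l : List (Fin n)) :
    egen Q a * egenProd Q l = (-1 : ℝ) ^ (l.length + l.count a) • (egenProd Q l * egen Q a) := by
  induction l with
  | nil => simp
  | cons b l ih =>
    simp only [egenProd_cons, List.length_cons, List.count_cons, beq_iff_eq]
    obtain rfl | hab := eq_or_ne a b
    · conv_lhs => rw [ih, mul_smul_comm, ← mul_assoc]
      rw [if_pos rfl]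
      congr 1
      ring
    · conv_lhs => rw [← mul_assoc, hQ.egen_mul_egen_of_ne hab, neg_mul, mul_assoc, ih,
        mul_smul_comm, ← mul_assoc, ← neg_smul]
      rw [if_neg hab.symm]
      congr 1
      ring

theorem DiagQ.egenProd_cons_append_cons (hQ : DiagQ Q) (a : Fin n) (s t : List (Fin n)) :
    egenProd Q (a :: (s ++ a :: t)) =
      ((-1 : ℝ) ^ (s.length + s.count a) * Q (Pi.single a 1)) • egenProd Q (s ++ t) := by
  rw [egenProd_cons, egenProd_append, egenProd_cons, ← mul_assoc, hQ.egen_mul_egenProd,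
    smul_mul_assoc, mul_assoc (egenProd Q s), ← mul_assoc (egen Q a), egen_mul_self,
    ← Algebra.smul_def, mul_smul_comm, ← egenProd_append, smul_smul]

theorem DiagQ.egenProd_mem_one_of_even_count (hQ : DiagQ Q) (l : List (Fin n))
    (hl : ∀ a, Even (l.count a)) : egenProd Q l ∈ (1 : Submodule ℝ (CliffordAlgebra Q)) := by
  induction hlen : l.length using Nat.strong_induction_on generalizing l with
  | _ N ih =>
  match l with
  | [] => exact Submodule.mem_one.mpr ⟨1, map_one _⟩
  | a :: l =>
    have ha : a ∈ l := by
      by_contra h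
      simpa [List.count_eq_zero_of_not_mem h] using hl a
    obtain ⟨s, t, rfl⟩ := List.append_of_mem ha
    rw [hQ.egenProd_cons_append_cons]
    refine Submodule.smul_mem _ _ (ih _ ?_ (s ++ t) (fun b => ?_) rfl)
    · simp only [List.length_cons, List.length_append] at hlen ⊢
      omega
    · have := hl b
      simp only [List.count_cons, List.count_append, beq_iff_eq, Nat.even_iff] at this ⊢
      split_ifs at this <;> omega

variable (Q) in
/-- Under `DiagQ Q` we have `(egen Q a)⁻¹ = Q (Pi.single a 1) • egen Q a`, so this is the twisted
conjugation `x ↦ e_a * involute x * e_a⁻¹`. -/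
def twistConj (a : Fin n) : CliffordAlgebra Q →ₗ[ℝ] CliffordAlgebra Q :=
  Q (Pi.single a 1) • (LinearMap.mulLeft ℝ (egen Q a) ∘ₗ LinearMap.mulRight ℝ (egen Q a) ∘ₗ
    (involute (Q := Q)).toLinearMap)

theorem twistConj_apply (a : Fin n) (x : CliffordAlgebra Q) :
    twistConj Q a x = Q (Pi.single a 1) • (egen Q a * (involute x * egen Q a)) := rfl

theorem DiagQ.twistConj_egenProd (hQ : DiagQ Q) (a : Fin n) (l : List (Fin n)) :
    twistConj Q a (egenProd Q l) = (-1 : ℝ) ^ l.count a • egenProd Q l := by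
  rw [twistConj_apply, involute_egenProd, smul_mul_assoc, mul_smul_comm, ← mul_assoc,
    hQ.egen_mul_egenProd, smul_mul_assoc, mul_assoc, egen_mul_self, ← Algebra.commutes,
    ← Algebra.smul_def, smul_smul, smul_smul, smul_smul]
  congr 1
  have hsign : (-1 : ℝ) ^ l.length * (-1) ^ l.length = 1 := by rw [← mul_pow]; norm_num
  rw [pow_add]
  linear_combination ((-1 : ℝ) ^ l.length * (-1) ^ l.length * (-1) ^ l.count a) *
    hQ.mul_self_eq_one a + (-1 : ℝ) ^ l.count a * hsign

theorem DiagQ.twistConj_eq_self (hQ : DiagQ Q) (a : Fin n) {x : CliffordAlgebra Q}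
    (hc : x ∈ Subalgebra.center ℝ (CliffordAlgebra Q)) (hi : involute x = x) :
    twistConj Q a x = x := by
  rw [twistConj_apply, hi, ← mul_assoc, Subalgebra.mem_center_iff.mp hc, mul_assoc,
    egen_mul_self, ← Algebra.commutes, ← Algebra.smul_def, smul_smul, hQ.mul_self_eq_one,
    one_smul]

variable (Q) in
def evenWordSpan (s : Finset (Fin n)) : Submodule ℝ (CliffordAlgebra Q) :=
  Submodule.span ℝ {x | ∃ l : List (Fin n), (∀ a ∈ s, Even (l.count a)) ∧ egenProd Q l = x}

theorem evenWordSpan_empty : evenWordSpan Q ∅ = ⊤ := by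
  have hmul : evenWordSpan Q ∅ * evenWordSpan Q ∅ ≤ evenWordSpan Q ∅ := by
    rw [evenWordSpan, Submodule.span_mul_span]
    refine Submodule.span_mono ?_
    rintro _ ⟨_, ⟨l₁, -, rfl⟩, _, ⟨l₂, -, rfl⟩, rfl⟩
    exact ⟨l₁ ++ l₂, by simp, egenProd_append Q l₁ l₂⟩
  have hword (l : List (Fin n)) : egenProd Q l ∈ evenWordSpan Q ∅ :=
    Submodule.subset_span ⟨l, by simp, rfl⟩
  refine Submodule.eq_top_iff'.mpr fun x => ?_
  induction x using CliffordAlgebra.induction with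
  | algebraMap r => simpa [Algebra.algebraMap_eq_smul_one] using
      Submodule.smul_mem _ r (hword [])
  | ι v =>
    rw [← (Pi.basisFun ℝ (Fin n)).sum_repr v, map_sum]
    exact Submodule.sum_mem _ fun a _ => by
      simpa [egenProd, egen] using Submodule.smul_mem _ (v a) (hword [a])
  | mul x y hx hy => exact hmul (Submodule.mul_mem_mul hx hy)
  | add x y hx hy => exact add_mem hx hy

theorem DiagQ.add_twistConj_mem_evenWordSpan (hQ : DiagQ Q) (a : Fin n) {s : Finset (Fin n)}
    {x : CliffordAlgebra Q} (hx : x ∈ evenWordSpan Q s) :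
    x + twistConj Q a x ∈ evenWordSpan Q (insert a s) := by
  suffices evenWordSpan Q s ≤ (evenWordSpan Q (insert a s)).comap (LinearMap.id + twistConj Q a)
    from this hx
  refine Submodule.span_le.mpr ?_
  rintro _ ⟨l, hl, rfl⟩
  simp only [SetLike.mem_coe, Submodule.mem_comap, LinearMap.add_apply, LinearMap.id_apply,
    hQ.twistConj_egenProd]
  rcases Nat.even_or_odd (l.count a) with he | ho
  · rw [he.neg_one_pow, one_smul, ← two_smul ℝ]
    exact Submodule.smul_mem _ _
      (Submodule.subset_span ⟨l, (Finset.forall_mem_insert _ _ _).mpr ⟨he, hl⟩, rfl⟩)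
  · rw [ho.neg_one_pow, neg_one_smul, add_neg_cancel]
    exact zero_mem _

theorem DiagQ.evenWordSpan_univ_le_one (hQ : DiagQ Q) :
    evenWordSpan Q Finset.univ ≤ 1 :=
  Submodule.span_le.mpr fun _ ⟨l, hl, hx⟩ =>
    hx ▸ hQ.egenProd_mem_one_of_even_count l fun a => hl a (Finset.mem_univ a)

theorem DiagQ.exists_algebraMap_eq_of_mem_center_of_involute_eq (hQ : DiagQ Q)
    {x : CliffordAlgebra Q} (hc : x ∈ Subalgebra.center ℝ (CliffordAlgebra Q))
    (hi : involute x = x) : ∃ r : ℝ, algebraMap ℝ _ r = x := by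
  have hmem (s : Finset (Fin n)) : x ∈ evenWordSpan Q s := by
    induction s using Finset.induction_on with
    | empty => simp [evenWordSpan_empty]
    | insert a s _ ih =>
      have h := hQ.add_twistConj_mem_evenWordSpan a ih
      rwa [hQ.twistConj_eq_self a hc hi, ← two_smul ℝ, Submodule.smul_mem_iff _ two_ne_zero] at h
  exact Submodule.mem_one.mp (hQ.evenWordSpan_univ_le_one (hmem _))

theorem mem_Pset_of_isUnit_one_add_smul {T W : CliffordAlgebra Q} (hT : IsUnit T)
    (hW : W ∈ Subalgebra.center ℝ (CliffordAlgebra Q)) (hWW : involute W * W = 1)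
    (hTW : involute T = W * T) {ε : ℝ} (hε : ε = 1 ∨ ε = -1) (hU : IsUnit (1 + ε • W)) :
    T ∈ Pset Q := by
  have hεε : ε * ε = 1 := by rcases hε with rfl | rfl <;> norm_num
  have hinv : involute ((1 + ε • W) * T) = ε • ((1 + ε • W) * T) := by
    rw [map_mul, map_add, map_one, map_smul, hTW, add_mul, one_mul, smul_mul_assoc, ← mul_assoc,
      hWW, one_mul, add_mul, one_mul, smul_add, smul_mul_assoc, smul_smul, hεε, one_smul, add_comm]
  refine ⟨↑hU.unit⁻¹, (1 + ε • W) * T, ?_, Units.isUnit _, ?_, hU.mul hT, ?_⟩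
  · exact Set.units_inv_mem_center (add_mem (one_mem _) (Subalgebra.smul_mem _ hW ε))
  · rcases hε with rfl | rfl
    · exact .inl (mem_evenOdd_zero_of_involute_eq (by simpa using hinv))
    · exact .inr (mem_evenOdd_one_of_involute_eq_neg (by simpa using hinv))
  · rw [← mul_assoc, hU.val_inv_mul, one_mul]

theorem DiagQ.mem_Pset_of_involute_eq_mul (hQ : DiagQ Q) {T W : CliffordAlgebra Q}
    (hT : IsUnit T) (hW : W ∈ Subalgebra.center ℝ (CliffordAlgebra Q))
    (hTW : involute T = W * T) : T ∈ Pset Q := by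
  have hWW := involute_mul_self_eq_one_of_involute_eq_mul hT hTW
  obtain ⟨r, hr⟩ := hQ.exists_algebraMap_eq_of_mem_center_of_involute_eq
    (add_mem hW (involute_mem_center hW)) (by rw [map_add, involute_involute, add_comm])
  obtain ⟨ε, hε, hεr⟩ : ∃ ε : ℝ, (ε = 1 ∨ ε = -1) ∧ 2 + ε * r ≠ 0 := by
    by_cases h : 2 + r = 0
    · exact ⟨-1, .inr rfl, by linarith⟩
    · exact ⟨1, .inl rfl, by simpa using h⟩
  refine mem_Pset_of_isUnit_one_add_smul hT hW hWW hTW hε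
    (isUnit_one_add_smul_of_involute_mul_eq_one hW hWW hr ?_ hεr)
  rcases hε with rfl | rfl <;> norm_num

end

theorem stmt12 (hQ : DiagQ Q) (T : (CliffordAlgebra Q)ˣ)
    (h1 : reverse (Q := Q) (↑T : CliffordAlgebra Q) * ↑T ∈
      Subalgebra.center ℝ (CliffordAlgebra Q))
    (h2 : involute (reverse (Q := Q) (↑T : CliffordAlgebra Q)) * ↑T ∈
      Subalgebra.center ℝ (CliffordAlgebra Q)) :
    (↑T : CliffordAlgebra Q) ∈ Pset Q := by
  obtain ⟨W, hW, hTW⟩ := exists_mem_center_involute_eq_mul T.isUnit h1 h2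
  exact hQ.mem_Pset_of_involute_eq_mul T.isUnit hW hTW
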